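/- Let π₁ : H → M be a fiber bundle with path-connected base and φ₀ : H → H a map homotopic to the identity; set π₀ := π₁ ∘ φ₀. Suppose there exist points x, y ∈ M and a ℤ/2-cohomology class β of H such that β restricts nontrivially to π₀⁻¹(x), β restricts trivially to π₀⁻¹(y), and φ₀ restricted to π₀⁻¹(y) induces an injection (φ₀|)* : H*(π₁⁻¹(y); ℤ/2) → H*(π₀⁻¹(y); ℤ/2). Then we reach a contradiction; i.e., no such configuration exists. -/

import Mathlib

/-- A (mod 2, say) cohomology theory on topological spaces: a contravariant,
homotopy-invariant assignment of a pointed type (cohomology with its zero class)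
to each space. -/
structure CohomologyTheory : Type 1 where
  coh : (X : Type) → [TopologicalSpace X] → Type
  zero : ∀ (X : Type) [TopologicalSpace X], coh X
  pull : ∀ {X Y : Type} [TopologicalSpace X] [TopologicalSpace Y], C(X, Y) → coh Y → coh X
  pull_id : ∀ {X : Type} [TopologicalSpace X] (β : coh X), pull (ContinuousMap.id X) β = β
  pull_comp : ∀ {X Y Z : Type} [TopologicalSpace X] [TopologicalSpace Y] [TopologicalSpace Z]
    (f : C(X, Y)) (g : C(Y, Z)) (β : coh Z), pull (g.comp f) β = pull f (pull g β)
  pull_zero : ∀ {X Y : Type} [TopologicalSpace X] [TopologicalSpace Y] (f : C(X, Y)),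
    pull f (zero Y) = zero X
  pull_homotopic : ∀ {X Y : Type} [TopologicalSpace X] [TopologicalSpace Y]
    (f g : C(X, Y)), f.Homotopic g → ∀ β : coh Y, pull f β = pull g β

/-- The inclusion of the fiber of `π` over `x` as a continuous map. -/
def fiberIncl {H M : Type} [TopologicalSpace H] (π : H → M) (x : M) :
    C({h : H // π h = x}, H) :=
  ⟨Subtype.val, continuous_subtype_val⟩

/-- The restriction of `φ₀` to a fiber of `π₀ = π₁ ∘ φ₀`, as a continuous map into the
corresponding fiber of `π₁`. -/
def phiFiberRestrict {H M : Type} [TopologicalSpace H] (π₁ : H → M) (φ₀ : C(H, H))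
    (y : M) : C({h : H // π₁ (φ₀ h) = y}, {h : H // π₁ h = y}) :=
  ⟨fun h => ⟨φ₀ h, h.2⟩, by fun_prop⟩

/-! Since `φ₀ ≃ id`, restricting `β` to `π₀⁻¹(z)` equals restricting it to `π₁⁻¹(z)` and then
pulling back along `φ₀|`. Injectivity of `(φ₀|)*` over `y` makes `β` vanish on `π₁⁻¹(y)`, and local
triviality of `π₁` transports this vanishing along a path to `π₁⁻¹(x)`; pulling back along `φ₀|`
then makes `β` vanish on `π₀⁻¹(x)`. -/

open Topology

theorem PathConnectedSpace.apply_eq_of_forall_joinedIn {X Y : Type*} [TopologicalSpace X]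
    [PathConnectedSpace X] {f : X → Y}
    (hf : ∀ z, ∃ U ∈ 𝓝 z, ∀ a b, JoinedIn U a b → f a = f b) (x y : X) : f x = f y := by
  obtain ⟨γ⟩ := PathConnectedSpace.joined x y
  have : LocallyPathConnectedSpace unitInterval := (convex_Icc (0 : ℝ) 1).locallyPathConnectedSpace
  have hγ : IsLocallyConstant (f ∘ γ) := by
    refine (IsLocallyConstant.iff_eventually_eq _).2 fun t => ?_
    obtain ⟨U, hU, hfU⟩ := hf (γ t)
    have hγU : γ ⁻¹' U ∈ 𝓝 t := γ.continuous.continuousAt.preimage_mem_nhds hU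
    filter_upwards [pathComponentIn_mem_nhds hγU] with s hs
    exact (hfU _ _ ((hs.map γ.continuous).mono (Set.image_preimage_subset γ U))).symm
  simpa using hγ.apply_eq_of_preconnectedSpace 0 1

namespace Bundle.Trivialization

variable {Z B : Type} {F : Type*} [TopologicalSpace Z] [TopologicalSpace B] [TopologicalSpace F]
  {proj : Z → B} (e : Trivialization F proj)

/-- The homotopy is `(t, p) ↦ e⁻¹ (γ t, (e p).2)` for a path `γ` from `z` to `w` in the base set. -/
theorem exists_fiberIncl_homotopic_comp {z w : B} (h : JoinedIn e.baseSet z w) :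
    ∃ T : C({p // proj p = z}, {p // proj p = w}),
      (fiberIncl proj z).Homotopic ((fiberIncl proj w).comp T) := by
  set γ := h.somePath
  have hsource (p : {p // proj p = z}) : p.val ∈ e.source :=
    e.mem_source.2 (by rw [p.2]; exact h.source_mem)
  have hfib : Continuous fun p : {p // proj p = z} => (e p.val).2 :=
    continuous_snd.comp (e.continuousOn_toFun.comp_continuous continuous_subtype_val hsource)
  let G : C(unitInterval × {p // proj p = z}, Z) :=
    ⟨fun q => e.toOpenPartialHomeomorph.symm (γ q.1, (e q.2.val).2),
      e.toOpenPartialHomeomorph.continuousOn_symm.comp_continuous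
        ((γ.continuous.comp continuous_fst).prodMk (hfib.comp continuous_snd))
        fun q => e.mem_target.2 (h.somePath_mem q.1)⟩
  have hG₁ (p : {p // proj p = z}) : proj (G (1, p)) = w := by
    simpa [G, γ] using e.proj_symm_apply' h.target_mem
  let T : C({p // proj p = z}, {p // proj p = w}) :=
    ⟨fun p => ⟨G (1, p), hG₁ p⟩,
      (G.continuous.comp (continuous_const.prodMk continuous_id)).subtype_mk hG₁⟩
  refine ⟨T, ⟨⟨G, fun p => ?_, fun p => rfl⟩⟩⟩
  change e.toOpenPartialHomeomorph.symm (γ 0, (e p.val).2) = p.val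
  conv_rhs => rw [← e.symm_apply_mk_proj (hsource p), p.2]
  rw [γ.source]

end Bundle.Trivialization

namespace CohomologyTheory

variable (Coh : CohomologyTheory)

theorem pull_eq_self_of_homotopic_id {X : Type} [TopologicalSpace X] {f : C(X, X)}
    (hf : f.Homotopic (ContinuousMap.id X)) (β : Coh.coh X) : Coh.pull f β = β := by
  rw [Coh.pull_homotopic _ _ hf, Coh.pull_id]

theorem pull_eq_zero_of_homotopic_comp {X Y W : Type} [TopologicalSpace X] [TopologicalSpace Y]
    [TopologicalSpace W] {f : C(X, Y)} {g : C(W, Y)} {T : C(X, W)} (hf : f.Homotopic (g.comp T))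
    {β : Coh.coh Y} (hβ : Coh.pull g β = Coh.zero W) : Coh.pull f β = Coh.zero X := by
  rw [Coh.pull_homotopic _ _ hf, Coh.pull_comp, hβ, Coh.pull_zero]

theorem pull_fiberIncl_pull_eq_pull_phiFiberRestrict {H M : Type} [TopologicalSpace H]
    (π₁ : H → M) (φ : C(H, H)) (z : M) (β : Coh.coh H) :
    Coh.pull (fiberIncl (fun h => π₁ (φ h)) z) (Coh.pull φ β) =
      Coh.pull (phiFiberRestrict π₁ φ z) (Coh.pull (fiberIncl π₁ z) β) := by
  rw [← Coh.pull_comp, ← Coh.pull_comp]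
  rfl

theorem pull_fiberIncl_eq_zero_iff_of_joinedIn {Z B : Type} {F : Type*} [TopologicalSpace Z]
    [TopologicalSpace B] [TopologicalSpace F] {proj : Z → B} (e : Bundle.Trivialization F proj)
    {z w : B} (h : JoinedIn e.baseSet z w) (β : Coh.coh Z) :
    Coh.pull (fiberIncl proj z) β = Coh.zero _ ↔ Coh.pull (fiberIncl proj w) β = Coh.zero _ := by
  obtain ⟨T, hT⟩ := e.exists_fiberIncl_homotopic_comp h
  obtain ⟨T', hT'⟩ := e.exists_fiberIncl_homotopic_comp h.symm
  exact ⟨Coh.pull_eq_zero_of_homotopic_comp hT', Coh.pull_eq_zero_of_homotopic_comp hT⟩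

theorem pull_fiberIncl_eq_zero_iff {H M : Type} {F : Type*} [TopologicalSpace H]
    [TopologicalSpace M] [TopologicalSpace F] [PathConnectedSpace M] {π : H → M}
    (htriv : ∀ x : M, ∃ e : Bundle.Trivialization F π, x ∈ e.baseSet) (β : Coh.coh H)
    (x y : M) :
    Coh.pull (fiberIncl π x) β = Coh.zero _ ↔ Coh.pull (fiberIncl π y) β = Coh.zero _ := by
  refine iff_of_eq (PathConnectedSpace.apply_eq_of_forall_joinedIn
    (f := fun z => Coh.pull (fiberIncl π z) β = Coh.zero _) (fun z => ?_) x y)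
  obtain ⟨e, he⟩ := htriv z
  exact ⟨e.baseSet, e.open_baseSet.mem_nhds he,
    fun a b hab => propext (Coh.pull_fiberIncl_eq_zero_iff_of_joinedIn e hab β)⟩

end CohomologyTheory

theorem stmt17_general (Coh : CohomologyTheory) {H M F : Type} [TopologicalSpace H]
    [TopologicalSpace M] [TopologicalSpace F] [PathConnectedSpace M]
    (π₁ : H → M)
    (htriv : ∀ x : M, ∃ e : Bundle.Trivialization F π₁, x ∈ e.baseSet)
    (φ₀ : C(H, H)) (hφ : φ₀.Homotopic (ContinuousMap.id H))
    (β : Coh.coh H) (x y : M)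
    (hx : Coh.pull (fiberIncl (fun h => π₁ (φ₀ h)) x) β ≠ Coh.zero _)
    (hy : Coh.pull (fiberIncl (fun h => π₁ (φ₀ h)) y) β = Coh.zero _)
    (hinj : Function.Injective (Coh.pull (phiFiberRestrict π₁ φ₀ y))) :
    False := by
  have restrict (z : M) : Coh.pull (fiberIncl (fun h => π₁ (φ₀ h)) z) β =
      Coh.pull (phiFiberRestrict π₁ φ₀ z) (Coh.pull (fiberIncl π₁ z) β) := by
    rw [← Coh.pull_fiberIncl_pull_eq_pull_phiFiberRestrict, Coh.pull_eq_self_of_homotopic_id hφ]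
  have hy₁ : Coh.pull (fiberIncl π₁ y) β = Coh.zero _ :=
    hinj (by rw [← restrict, hy, Coh.pull_zero])
  have hx₁ : Coh.pull (fiberIncl π₁ x) β = Coh.zero _ :=
    (Coh.pull_fiberIncl_eq_zero_iff htriv β x y).2 hy₁
  exact hx (by rw [restrict, hx₁, Coh.pull_zero])

/-- Core contradiction in the proof of Legendrian non-displacement: for a fiber bundle
`π₁ : H → M` with path-connected base and `φ₀ ≃ id_H`, `π₀ := π₁ ∘ φ₀`, there is no
cohomology class `β` of `H` restricting nontrivially to `π₀⁻¹(x)` but trivially to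
`π₀⁻¹(y)` when `φ₀|_{π₀⁻¹(y)}` induces an injection on cohomology. -/
theorem stmt17 (Coh : CohomologyTheory) {H M F : Type} [TopologicalSpace H]
    [TopologicalSpace M] [TopologicalSpace F] [PathConnectedSpace M]
    (π₁ : H → M) (hπ : Continuous π₁)
    (htriv : ∀ x : M, ∃ e : Bundle.Trivialization F π₁, x ∈ e.baseSet)
    (φ₀ : C(H, H)) (hφ : φ₀.Homotopic (ContinuousMap.id H))
    (β : Coh.coh H) (x y : M)
    (hx : Coh.pull (fiberIncl (fun h => π₁ (φ₀ h)) x) β ≠ Coh.zero _)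
    (hy : Coh.pull (fiberIncl (fun h => π₁ (φ₀ h)) y) β = Coh.zero _)
    (hinj : Function.Injective (Coh.pull (phiFiberRestrict π₁ φ₀ y))) :
    False :=
  stmt17_general Coh π₁ htriv φ₀ hφ β x y hx hy hinj
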